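/- Let (K, v) be a valued field of characteristic p > 0 and let c, e ∈ K with c ≠ 0 and e ≠ 0. (1) Every m ∈ K with m ≠ 0 and c·m^p = e·m satisfies (p − 1)·v(m) = v(e) − v(c); in particular, all nonzero such m have the same valuation. (2) If moreover K is separably closed, then for every n ∈ K with n ≠ 0 there exists m ∈ K with c·m^p − e·m = n, and the set {v(m) : m ∈ K, c·m^p − e·m = n} has at most two elements. -/

import Mathlib

/-- A valuation on a field `K` with values in the linearly ordered abelian group `Γ`
(together with `∞ = ⊤`), surjective onto `Γ`, i.e. `Γ = v(K^×)`. -/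
structure ValuedFieldAux (K : Type*) [Field K] (Γ : Type*)
    [AddCommGroup Γ] [LinearOrder Γ] [IsOrderedAddMonoid Γ] where
  v : K → WithTop Γ
  v_eq_top_iff : ∀ x : K, v x = ⊤ ↔ x = 0
  v_mul : ∀ x y : K, v (x * y) = v x + v y
  v_add : ∀ x y : K, min (v x) (v y) ≤ v (x + y)
  v_surj : ∀ γ : Γ, ∃ x : K, v x = (γ : WithTop Γ)

/-!
Write `A = v(c·m^p)` and `B = v(e·m)` for a root `m ≠ 0` of `c·m^p − e·m = n`. Either `A = B`,
which is equivalent to `(p − 1)·v(m) + v(c) = v(e)`, or the ultrametric inequality is an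
equality and `v(n) = min(v(c) + p·v(m), v(e) + v(m))`. Each of these two conditions determines
`v(m)`, since `γ ↦ (p − 1)·γ` and `γ ↦ min(v(c) + p·γ, v(e) + γ)` are strictly increasing on `Γ`;
so there are at most two possible valuations. A root exists because the polynomial
`c·X^p − e·X − n` has derivative `−e` and is therefore separable.
-/

theorem Function.exists_forall_eq_or_eq_of_injective {α β : Type*} [Nonempty α] {f g : α → β}
    (hf : f.Injective) (hg : g.Injective) (b₁ b₂ : β) :
    ∃ a₁ a₂ : α, ∀ x, f x = b₁ ∨ g x = b₂ → x = a₁ ∨ x = a₂ :=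
  ⟨f.invFun b₁, g.invFun b₂, fun x hx => hx.imp
    (fun h : f x = b₁ => h ▸ (Function.leftInverse_invFun hf x).symm)
    (fun h : g x = b₂ => h ▸ (Function.leftInverse_invFun hg x).symm)⟩

section LinearOrderedAddCommGroup

variable {Γ : Type*} [AddCommGroup Γ] [LinearOrder Γ] [IsOrderedAddMonoid Γ] {k : ℕ}

theorem injective_nsmul_add (hk : k ≠ 0) (a : Γ) : Function.Injective fun x : Γ => k • x + a :=
  (add_left_injective a).comp (nsmul_right_strictMono hk).injective

theorem strictMono_min_add_nsmul_add (hk : k ≠ 0) (a b : Γ) :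
    StrictMono fun x : Γ => min (a + k • x) (b + x) :=
  fun _ _ h => min_lt_min (add_lt_add_right (nsmul_right_strictMono hk h) a) (add_lt_add_right h b)

end LinearOrderedAddCommGroup

theorem IsSepClosed.exists_mul_pow_sub_mul_eq {K : Type*} [Field K] [IsSepClosed K] (p : ℕ)
    [CharP K p] (hp : p.Prime) {e : K} (he : e ≠ 0) (c n : K) :
    ∃ m : K, c * m ^ p - e * m = n := by
  obtain ⟨m, hm⟩ := IsSepClosed.exists_root_C_mul_X_pow_add_C_mul_X_add_C' p p c (-e) (-n)
    dvd_rfl hp.two_le (neg_ne_zero.2 he)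
  exact ⟨m, by linear_combination hm⟩

namespace ValuedFieldAux

variable {K : Type*} [Field K] {Γ : Type*} [AddCommGroup Γ] [LinearOrder Γ]
  [IsOrderedAddMonoid Γ] (vf : ValuedFieldAux K Γ)

theorem v_ne_top {x : K} (hx : x ≠ 0) : vf.v x ≠ ⊤ :=
  (vf.v_eq_top_iff x).not.2 hx

theorem exists_v_eq_coe {x : K} (hx : x ≠ 0) : ∃ γ : Γ, vf.v x = γ :=
  WithTop.ne_top_iff_exists.1 (vf.v_ne_top hx) |>.imp fun _ => Eq.symm

theorem v_one : vf.v 1 = 0 := by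
  have h : vf.v 1 + vf.v 1 = vf.v 1 + 0 := by rw [← vf.v_mul, one_mul, add_zero]
  exact (WithTop.add_left_inj (vf.v_ne_top one_ne_zero)).1 h

def toAddValuation : AddValuation K (WithTop Γ) :=
  AddValuation.of vf.v ((vf.v_eq_top_iff 0).2 rfl) vf.v_one vf.v_add vf.v_mul

theorem v_pow (x : K) (k : ℕ) : vf.v (x ^ k) = k • vf.v x :=
  vf.toAddValuation.map_pow x k

theorem v_sub_eq_min_of_ne {x y : K} (h : vf.v x ≠ vf.v y) :
    vf.v (x - y) = min (vf.v x) (vf.v y) := by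
  have h' : vf.toAddValuation x ≠ vf.toAddValuation (-y) := by
    rwa [AddValuation.map_neg]
  rw [sub_eq_add_neg]
  exact (vf.toAddValuation.map_add_of_distinct_val h').trans
    (congrArg _ (vf.toAddValuation.map_neg y))

variable {c e m : K} {p : ℕ}

theorem v_mul_pow_eq_v_mul_iff (hm : m ≠ 0) (hp : p ≠ 0) :
    vf.v (c * m ^ p) = vf.v (e * m) ↔ (p - 1) • vf.v m + vf.v c = vf.v e := by
  obtain ⟨k, rfl⟩ := Nat.exists_eq_succ_of_ne_zero hp
  rw [vf.v_mul, vf.v_mul, v_pow, succ_nsmul, Nat.succ_sub_one,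
    ← WithTop.add_right_inj (vf.v_ne_top hm) (x := k • vf.v m + vf.v c), ← add_assoc,
    add_comm (vf.v c)]

theorem v_eq_or_v_eq_min_of_mul_pow_sub_mul_eq (hm : m ≠ 0) (hp : p ≠ 0) {n : K} (h : c * m ^ p - e * m = n) :
    (p - 1) • vf.v m + vf.v c = vf.v e ∨ vf.v n = min (vf.v c + p • vf.v m) (vf.v e + vf.v m) := by
  by_cases hv : vf.v (c * m ^ p) = vf.v (e * m)
  · exact .inl ((vf.v_mul_pow_eq_v_mul_iff hm hp).1 hv)
  · rw [← h, vf.v_sub_eq_min_of_ne hv, vf.v_mul, vf.v_mul, v_pow]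
    exact .inr rfl

end ValuedFieldAux

/-- Let `(K, v)` be a valued field of characteristic `p > 0` and
`c, e ∈ K` nonzero. (1) Every nonzero `m` with `c·m^p = e·m` satisfies
`(p − 1)·v m = v e − v c` (stated as `(p − 1)·v m + v c = v e`); in particular all
such `m` share the same valuation. (2) If moreover `K` is separably closed, then for
every `n ≠ 0` there is `m` with `c·m^p − e·m = n`, and the set of valuations of such
`m` has at most two elements. -/
theorem stmt_10 (p : ℕ) (hp : p.Prime) (K : Type*) [Field K] [CharP K p]
    (Γ : Type*) [AddCommGroup Γ] [LinearOrder Γ] [IsOrderedAddMonoid Γ] (vf : ValuedFieldAux K Γ)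
    (c e : K) (hc : c ≠ 0) (he : e ≠ 0) :
    (∀ m : K, m ≠ 0 → c * m ^ p = e * m → (p - 1) • vf.v m + vf.v c = vf.v e) ∧
    (IsSepClosed K → ∀ n : K, n ≠ 0 →
      (∃ m : K, c * m ^ p - e * m = n) ∧
      ∃ γ₁ γ₂ : WithTop Γ, ∀ m : K, c * m ^ p - e * m = n →
        vf.v m = γ₁ ∨ vf.v m = γ₂) := by
  refine ⟨fun m hm h => (vf.v_mul_pow_eq_v_mul_iff hm hp.ne_zero).1 (congrArg vf.v h),
    fun _ n hn => ⟨IsSepClosed.exists_mul_pow_sub_mul_eq p hp he c n, ?_⟩⟩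
  obtain ⟨γc, hγc⟩ := vf.exists_v_eq_coe hc
  obtain ⟨γe, hγe⟩ := vf.exists_v_eq_coe he
  obtain ⟨γn, hγn⟩ := vf.exists_v_eq_coe hn
  obtain ⟨a, b, hab⟩ := Function.exists_forall_eq_or_eq_of_injective
    (injective_nsmul_add (Nat.sub_ne_zero_of_lt hp.one_lt) γc)
    (strictMono_min_add_nsmul_add hp.ne_zero γc γe).injective γe γn
  refine ⟨a, b, fun m hm => ?_⟩
  have hm0 : m ≠ 0 := by
    rintro rfl
    exact hn (by simpa [hp.ne_zero] using hm.symm)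
  obtain ⟨γ, hγ⟩ := vf.exists_v_eq_coe hm0
  have hv := vf.v_eq_or_v_eq_min_of_mul_pow_sub_mul_eq hm0 hp.ne_zero hm
  rw [hγ, hγc, hγe, hγn] at hv
  norm_cast at hv
  rw [hγ]
  exact (hab γ (hv.imp id Eq.symm)).imp (congrArg _) (congrArg _)
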